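/- arXiv:1609.08328 — 3 statements merged into one kernel-verified Lean document; each statement's English description precedes it below -/
import Mathlib

section
/- Let d ≥ 1, let f : ℝ^d → ℝ be continuous, let C ∈ (1/2, 1) and k > 0, and let (z_i)_{i≥0} be a sequence in ℝ^d satisfying |f(z_{i+1})| ≤ C·|f(z_i)| for all i ≥ 0 and ‖z_{i+1} − z_i‖ ≤ ‖z_i − z_{i−1}‖/2 + k·|f(z_i)| for all i ≥ 1. Then the sequence (z_i) converges to some point l ∈ ℝ^d with f(l) = 0. -/
/-!
The residuals `|f (z n)|` decay geometrically with ratio `C`. Feeding this into the step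
recursion, whose own contraction ratio `1/2` is smaller than `C`, shows that the step sizes
`‖z (n + 1) - z n‖` also decay like `C ^ n`. Hence `(z n)` is Cauchy, its limit `l` exists by
completeness, and `f l = 0` by continuity since `f (z n) → 0`.
-/

open Filter Topology

theorem le_mul_pow_of_le_mul_add_pow {s : ℕ → ℝ} {r b C : ℝ} (hr : 0 ≤ r) (hrC : r < C)
    (hs0 : 0 ≤ s 0) (hb : 0 ≤ b) (h : ∀ n, s (n + 1) ≤ r * s n + b * C ^ (n + 1)) (n : ℕ) :
    s n ≤ (s 0 + b * C / (C - r)) * C ^ n := by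
  have hCr : 0 < C - r := sub_pos.mpr hrC
  have hCn : ∀ n, 0 ≤ C ^ n := fun n => pow_nonneg (hr.trans hrC.le) n
  induction n with
  | zero => simpa using div_nonneg (mul_nonneg hb (hr.trans hrC.le)) hCr.le
  | succ n ih =>
    have hbC : b * C / (C - r) * (C - r) = b * C := div_mul_cancel₀ _ hCr.ne'
    calc s (n + 1) ≤ r * s n + b * C ^ (n + 1) := h n
      _ ≤ r * ((s 0 + b * C / (C - r)) * C ^ n) + b * C ^ (n + 1) := by gcongr
      _ = (s 0 + b * C / (C - r)) * C ^ (n + 1) - (C - r) * s 0 * C ^ n := by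
          linear_combination (-C ^ n) * hbC
      _ ≤ (s 0 + b * C / (C - r)) * C ^ (n + 1) := by
          have := mul_nonneg (mul_nonneg hCr.le hs0) (hCn n)
          linarith

theorem safip_chain_converges_to_solution_general
    (d : ℕ)
    (f : EuclideanSpace ℝ (Fin d) → ℝ) (hf : Continuous f)
    (C k : ℝ) (hC : 1/2 < C ∧ C < 1) (hk : 0 < k)
    (z : ℕ → EuclideanSpace ℝ (Fin d))
    (hchain : ∀ i : ℕ, |f (z (i + 1))| ≤ C * |f (z i)|)
    (hstep : ∀ i : ℕ, 1 ≤ i →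
      ‖z (i + 1) - z i‖ ≤ ‖z i - z (i - 1)‖ / 2 + k * |f (z i)|) :
    ∃ l : EuclideanSpace ℝ (Fin d),
      Filter.Tendsto z Filter.atTop (nhds l) ∧ f l = 0 := by
  obtain ⟨hC_half, hC_one⟩ := hC
  have hC0 : 0 ≤ C := by linarith
  have hres (n : ℕ) : |f (z n)| ≤ C ^ n * |f (z 0)| :=
    le_geom (u := fun n => |f (z n)|) hC0 n fun i _ => hchain i
  obtain ⟨B, hsteps⟩ : ∃ B, ∀ n, ‖z (n + 1) - z n‖ ≤ B * C ^ n := by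
    refine ⟨_, le_mul_pow_of_le_mul_add_pow (s := fun n => ‖z (n + 1) - z n‖)
      (b := k * |f (z 0)|) (by norm_num) hC_half (norm_nonneg _) (by positivity) fun n => ?_⟩
    calc ‖z (n + 1 + 1) - z (n + 1)‖ ≤ ‖z (n + 1) - z n‖ / 2 + k * |f (z (n + 1))| :=
          hstep (n + 1) n.succ_pos
      _ ≤ 1 / 2 * ‖z (n + 1) - z n‖ + k * |f (z 0)| * C ^ (n + 1) := by
          linarith [mul_le_mul_of_nonneg_left (hres (n + 1)) hk.le]
  have hcauchy : CauchySeq z :=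
    cauchySeq_of_le_geometric C B hC_one fun n => by rw [dist_comm, dist_eq_norm]; exact hsteps n
  obtain ⟨l, hl⟩ := cauchySeq_tendsto_of_complete hcauchy
  have hres_zero : Tendsto (fun n => f (z n)) atTop (𝓝 0) :=
    squeeze_zero_norm hres <| by
      simpa using (tendsto_pow_atTop_nhds_zero_of_lt_one hC0 hC_one).mul_const |f (z 0)|
  exact ⟨l, hl, tendsto_nhds_unique ((hf.tendsto l).comp hl) hres_zero⟩

/-- SAFIP convergence (Theorem 1, deterministic content): any infinite SAFIP chain
for a continuous `f` with parameters `C ∈ (1/2, 1)` and `k > 0` converges to a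
zero of `f`. -/
theorem safip_chain_converges_to_solution
    (d : ℕ) (hd : 1 ≤ d)
    (f : EuclideanSpace ℝ (Fin d) → ℝ) (hf : Continuous f)
    (C k : ℝ) (hC : 1/2 < C ∧ C < 1) (hk : 0 < k)
    (z : ℕ → EuclideanSpace ℝ (Fin d))
    (hchain : ∀ i : ℕ, |f (z (i + 1))| ≤ C * |f (z i)|)
    (hstep : ∀ i : ℕ, 1 ≤ i →
      ‖z (i + 1) - z i‖ ≤ ‖z i - z (i - 1)‖ / 2 + k * |f (z i)|) :
    ∃ l : EuclideanSpace ℝ (Fin d),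
      Filter.Tendsto z Filter.atTop (nhds l) ∧ f l = 0 :=
  safip_chain_converges_to_solution_general d f hf C k hC hk z hchain hstep
end

section
/- Let d ≥ 1, let f : ℝ^d → ℝ, let x, z_0 ∈ ℝ^d with f(x) = 0 and ‖x − z_0‖ = ε_0 > 0, let k > k_1 > 0 with k_1·|f(z_0)| < 2·ε_0 and f(z_0) ≠ 0, let R_0 > 0, and let m > 0 with m·k_1 < 1/2. Assume that every z in the set E = {z : k_1·|f(z_0)| ≤ ‖z − z_0‖ ≤ R_0/2 + k·|f(z_0)|} with ‖z − x‖ < ε_0 satisfies |f(z_0)| − |f(z)| ≥ m·‖z − z_0‖. Then there exists z_1 ∈ ℝ^d with ‖z_1 − x‖ < ε_0, k_1·|f(z_0)| ≤ ‖z_1 − z_0‖ ≤ R_0/2 + k·|f(z_0)|, and |f(z_1)| ≤ (1 − m·k_1)·|f(z_0)|. -/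
/-! The offspring is the point at distance `k₁ |f z₀|` from `z₀` on the segment towards `x`:
since `0 < k₁ |f z₀| < 2 ε₀` it lies strictly inside `B(x, ε₀)`, it sits on the inner boundary of
the annulus, and the growth condition there gives `|f z₁| ≤ |f z₀| - m k₁ |f z₀|`. -/

open AffineMap

theorem exists_norm_sub_eq_and_norm_sub_lt {E : Type*} [NormedAddCommGroup E] [NormedSpace ℝ E]
    {x y : E} {r : ℝ} (hr : 0 < r) (hr2 : r < 2 * ‖x - y‖) :
    ∃ z : E, ‖z - y‖ = r ∧ ‖z - x‖ < ‖x - y‖ := by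
  have hxy : 0 < ‖x - y‖ := by linarith
  set c := r / ‖x - y‖
  have hc : 0 < c := div_pos hr hxy
  have hc2 : c < 2 := (div_lt_iff₀ hxy).2 hr2
  refine ⟨lineMap y x c, ?_, ?_⟩
  · rw [← dist_eq_norm, dist_comm, dist_left_lineMap, dist_eq_norm', Real.norm_of_nonneg hc.le,
      div_mul_cancel₀ r hxy.ne']
  · rw [← dist_eq_norm, dist_lineMap_right, dist_eq_norm', Real.norm_eq_abs]
    exact mul_lt_of_lt_one_left hxy (abs_lt.2 ⟨by linarith, by linarith⟩)

theorem safip_exists_offspring_general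
    (d : ℕ)
    (f : EuclideanSpace ℝ (Fin d) → ℝ)
    (x z0 : EuclideanSpace ℝ (Fin d)) (ε0 k k1 R0 m : ℝ)
    (hxz0 : ‖x - z0‖ = ε0)
    (hk1 : 0 < k1) (hkk1 : k1 < k) (hk1f : k1 * |f z0| < 2 * ε0)
    (hfz0 : f z0 ≠ 0) (hR0 : 0 < R0)
    (hgrowth : ∀ z : EuclideanSpace ℝ (Fin d),
      k1 * |f z0| ≤ ‖z - z0‖ → ‖z - z0‖ ≤ R0 / 2 + k * |f z0| →
      ‖z - x‖ < ε0 → |f z0| - |f z| ≥ m * ‖z - z0‖) :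
    ∃ z1 : EuclideanSpace ℝ (Fin d),
      ‖z1 - x‖ < ε0 ∧
      k1 * |f z0| ≤ ‖z1 - z0‖ ∧ ‖z1 - z0‖ ≤ R0 / 2 + k * |f z0| ∧
      |f z1| ≤ (1 - m * k1) * |f z0| := by
  have hfz0_pos : 0 < |f z0| := abs_pos.2 hfz0
  obtain ⟨z1, hz1z0, hz1x⟩ :=
    exists_norm_sub_eq_and_norm_sub_lt (mul_pos hk1 hfz0_pos) (hxz0 ▸ hk1f)
  rw [hxz0] at hz1x
  have hinner_le_outer : k1 * |f z0| ≤ R0 / 2 + k * |f z0| := by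
    have := mul_le_mul_of_nonneg_right hkk1.le hfz0_pos.le
    linarith
  have hdecrease := hgrowth z1 hz1z0.ge (hz1z0 ▸ hinner_le_outer) hz1x
  refine ⟨z1, hz1x, hz1z0.ge, hz1z0 ▸ hinner_le_outer, ?_⟩
  rw [hz1z0] at hdecrease
  linarith

/-- Key inductive step of the proof of Theorem 2: near a solution `x` of
`f(x) = 0`, under the local growth condition, a chain point `z_0` at distance
`ε_0` from `x` admits an eligible offspring `z_1`. -/
theorem safip_exists_offspring
    (d : ℕ) (hd : 1 ≤ d)
    (f : EuclideanSpace ℝ (Fin d) → ℝ)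
    (x z0 : EuclideanSpace ℝ (Fin d)) (ε0 k k1 R0 m : ℝ)
    (hfx : f x = 0) (hε0 : 0 < ε0) (hxz0 : ‖x - z0‖ = ε0)
    (hk1 : 0 < k1) (hkk1 : k1 < k) (hk1f : k1 * |f z0| < 2 * ε0)
    (hfz0 : f z0 ≠ 0) (hR0 : 0 < R0) (hm : 0 < m) (hmk1 : m * k1 < 1/2)
    (hgrowth : ∀ z : EuclideanSpace ℝ (Fin d),
      k1 * |f z0| ≤ ‖z - z0‖ → ‖z - z0‖ ≤ R0 / 2 + k * |f z0| →
      ‖z - x‖ < ε0 → |f z0| - |f z| ≥ m * ‖z - z0‖) :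
    ∃ z1 : EuclideanSpace ℝ (Fin d),
      ‖z1 - x‖ < ε0 ∧
      k1 * |f z0| ≤ ‖z1 - z0‖ ∧ ‖z1 - z0‖ ≤ R0 / 2 + k * |f z0| ∧
      |f z1| ≤ (1 - m * k1) * |f z0| :=
  safip_exists_offspring_general d f x z0 ε0 k k1 R0 m hxz0 hk1 hkk1 hk1f hfz0 hR0 hgrowth
end

section
/- Let d ≥ 1, let f : ℝ^d → ℝ and g : ℝ^d → ℝ be continuous, let C ∈ (1/2, 1) and k > 0, and let (z_i)_{i≥0} be a sequence in ℝ^d satisfying max(|f(z_{i+1})|, |g(z_{i+1})|) ≤ C·max(|f(z_i)|, |g(z_i)|) for all i ≥ 0 and ‖z_{i+1} − z_i‖ ≤ ‖z_i − z_{i−1}‖/2 + k·max(|f(z_i)|, |g(z_i)|) for all i ≥ 1. Then the sequence (z_i) converges to some point l ∈ ℝ^d with f(l) = 0 and g(l) = 0. -/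
open Filter Topology

/- The residual `max(|f z_i|, |g z_i|)` decays like `C ^ i`, so the step recursion
`d_{i+1} ≤ d_i / 2 + k · residual` forces the step lengths to decay like `C ^ i` as well
(this is where `1/2 < C` enters). Geometrically decaying steps make `z` Cauchy, and by
continuity its limit is a common zero of `f` and `g`, since both residuals tend to `0`. -/

lemma le_mul_pow_of_le_mul_add_mul_pow {d : ℕ → ℝ} {r C B : ℝ} (hr : 0 ≤ r) (hrC : r < C)
    (hB : 0 ≤ B) (hd₀ : 0 ≤ d 0) (h : ∀ n, d (n + 1) ≤ r * d n + B * C ^ (n + 1)) (n : ℕ) :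
    d n ≤ (d 0 + B * C / (C - r)) * C ^ n := by
  set A := d 0 + B * C / (C - r)
  have hgap : 0 < C - r := sub_pos.mpr hrC
  have hA : r * A + B * C ≤ A * C := by
    have : A * (C - r) = d 0 * (C - r) + B * C := by
      simp only [A]; field_simp
    nlinarith
  induction n with
  | zero => simpa [A] using div_nonneg (mul_nonneg hB (hr.trans hrC.le)) hgap.le
  | succ n ih =>
    have hCn : 0 ≤ C ^ n := pow_nonneg (hr.trans hrC.le) n
    calc d (n + 1) ≤ r * d n + B * C ^ (n + 1) := h n
      _ ≤ r * (A * C ^ n) + B * C ^ (n + 1) := by gcongr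
      _ = (r * A + B * C) * C ^ n := by ring
      _ ≤ A * C * C ^ n := by gcongr
      _ = A * C ^ (n + 1) := by ring

lemma Continuous.eq_zero_of_tendsto_of_abs_le {X : Type*} [TopologicalSpace X] [T2Space X]
    {f : X → ℝ} (hf : Continuous f) {z : ℕ → X} {l : X} (hz : Tendsto z atTop (𝓝 l))
    {M : ℕ → ℝ} (hM : Tendsto M atTop (𝓝 0)) (hfM : ∀ n, |f (z n)| ≤ M n) : f l = 0 :=
  tendsto_nhds_unique ((hf.tendsto l).comp hz) (squeeze_zero_norm hfM hM)

theorem safip_simultaneous_chain_converges_general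
    (d : ℕ)
    (f g : EuclideanSpace ℝ (Fin d) → ℝ) (hf : Continuous f) (hg : Continuous g)
    (C k : ℝ) (hC : 1/2 < C ∧ C < 1) (hk : 0 < k)
    (z : ℕ → EuclideanSpace ℝ (Fin d))
    (hchain : ∀ i : ℕ,
      max |f (z (i + 1))| |g (z (i + 1))| ≤ C * max |f (z i)| |g (z i)|)
    (hstep : ∀ i : ℕ, 1 ≤ i →
      ‖z (i + 1) - z i‖ ≤ ‖z i - z (i - 1)‖ / 2 + k * max |f (z i)| |g (z i)|) :
    ∃ l : EuclideanSpace ℝ (Fin d),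
      Filter.Tendsto z Filter.atTop (nhds l) ∧ f l = 0 ∧ g l = 0 := by
  obtain ⟨hC_half, hC_one⟩ := hC
  set M : ℕ → ℝ := fun i => max |f (z i)| |g (z i)|
  have hM_nonneg (n : ℕ) : 0 ≤ M n := (abs_nonneg _).trans (le_max_left _ _)
  have hM_geom (n : ℕ) : M n ≤ C ^ n * M 0 := le_geom (by linarith) n fun i _ => hchain i
  have hM_lim : Tendsto M atTop (𝓝 0) := by
    refine squeeze_zero hM_nonneg hM_geom ?_
    simpa using (tendsto_pow_atTop_nhds_zero_of_lt_one (by linarith) hC_one).mul_const (M 0)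
  have hsteps := le_mul_pow_of_le_mul_add_mul_pow (d := fun n => ‖z (n + 1) - z n‖)
    (B := k * M 0) (by norm_num : (0 : ℝ) ≤ 1 / 2) hC_half
    (mul_nonneg hk.le (hM_nonneg 0)) (norm_nonneg _) fun n => by
      have hres := mul_le_mul_of_nonneg_left (hM_geom (n + 1)) hk.le
      have hrec := hstep (n + 1) n.succ_pos
      simp only [Nat.add_sub_cancel] at hrec
      linarith
  obtain ⟨l, hl⟩ := cauchySeq_tendsto_of_complete <|
    cauchySeq_of_le_geometric (f := z) C _ hC_one fun n => by simpa [dist_eq_norm'] using hsteps n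
  exact ⟨l, hl, hf.eq_zero_of_tendsto_of_abs_le hl hM_lim fun n => le_max_left _ _,
    hg.eq_zero_of_tendsto_of_abs_le hl hM_lim fun n => le_max_right _ _⟩

/-- SAFIP for simultaneous inverse problems (Section 3): a chain satisfying the
modified conditions with `max(|f|, |g|)` converges to a common zero of `f`
and `g`. -/
theorem safip_simultaneous_chain_converges
    (d : ℕ) (hd : 1 ≤ d)
    (f g : EuclideanSpace ℝ (Fin d) → ℝ) (hf : Continuous f) (hg : Continuous g)
    (C k : ℝ) (hC : 1/2 < C ∧ C < 1) (hk : 0 < k)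
    (z : ℕ → EuclideanSpace ℝ (Fin d))
    (hchain : ∀ i : ℕ,
      max |f (z (i + 1))| |g (z (i + 1))| ≤ C * max |f (z i)| |g (z i)|)
    (hstep : ∀ i : ℕ, 1 ≤ i →
      ‖z (i + 1) - z i‖ ≤ ‖z i - z (i - 1)‖ / 2 + k * max |f (z i)| |g (z i)|) :
    ∃ l : EuclideanSpace ℝ (Fin d),
      Filter.Tendsto z Filter.atTop (nhds l) ∧ f l = 0 ∧ g l = 0 :=
  safip_simultaneous_chain_converges_general d f g hf hg C k hC hk z hchain hstep
end
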